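/- Let φ be a CNF formula and let F̄_x, F̄_y be (t⁺,t⁻)-labeled signed subgraphs of F_φ on disjoint vertex sets, and let F̄_z = F̄_x ⊗_{g|f₁,f₂} F̄_y be their labeling composition with relabelings f₁^±, f₂^±, g^±. Let ν be a partial assignment on the variables of F_z, with restrictions ν_x, ν_y, and let Σ_x⁺ = span{lab_x⁺(w) : ν_x(w)=1}, Σ_x⁻ = span{lab_x⁻(w) : ν_x(w)=0}, and analogously Σ_y⁺, Σ_y⁻. Let Π_z⁺ ⊆ GF(2)^{t⁺} and Π_z⁻ ⊆ GF(2)^{t⁻} be arbitrary subspaces, and define Σ_z^± = f₁^±(Σ_x^±) + f₂^±(Σ_y^±), Π_x^± = (f₁^±)ᵀ(Π_z^±) + g^±(Σ_y^±), and Π_y^± = (f₂^±)ᵀ(Π_z^±) + (g^±)ᵀ(Σ_x^±). Then the defect of ν in F̄_z with respect to the defective shape (Σ_z⁺, Σ_z⁻, Π_z⁺, Π_z⁻) equals the defect of ν_x in F̄_x with respect to the defective shape (Σ_x⁺, Σ_x⁻, Π_x⁺, Π_x⁻) plus the defect of ν_y in F̄_y with respect to the defective shape (Σ_y⁺, Σ_y⁻,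 Π_y⁺, Π_y⁻). -/
import Mathlib


/-- Scalar product of binary vectors over GF(2). -/
def dotp {t : ℕ} (u v : Fin t → ZMod 2) : ZMod 2 := ∑ i, u i * v i

/-- The signed (bipartite) graph F_φ of a CNF formula φ with variable set `Var` and
clause set `Cl`:  `pos w c` means the literal w occurs in clause c (wc ∈ E⁺), and
`neg w c` means ¬w occurs in c (wc ∈ E⁻); the two edge sets are disjoint. -/
structure SignedBip (Var Cl : Type) where
  pos : Var → Cl → Prop
  neg : Var → Cl → Prop
  disj : ∀ w c, ¬ (pos w c ∧ neg w c)

/-- The assignment ν satisfies the clause c. -/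
def SignedBip.SatClause {Var Cl : Type} (F : SignedBip Var Cl) (ν : Var → Bool) (c : Cl) : Prop :=
  (∃ w, ν w = true ∧ F.pos w c) ∨ (∃ w, ν w = false ∧ F.neg w c)

/-- The assignment ν satisfies the formula φ (every clause of φ). -/
def SignedBip.Satisfies {Var Cl : Type} (F : SignedBip Var Cl) (ν : Var → Bool) : Prop :=
  ∀ c, F.SatClause ν c

/-- A (t⁺,t⁻)-labeled signed (sub)graph: vertex sets `VW ⊆ Var`, `VC ⊆ Cl`,
two edge relations, and labelings lab⁺, lab⁻ into GF(2)^{t⁺}, GF(2)^{t⁻}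
(given on variable vertices and clause vertices separately). -/
structure LabSub (Var Cl : Type) (tp tn : ℕ) where
  pos : Var → Cl → Prop
  neg : Var → Cl → Prop
  VW : Set Var
  VC : Set Cl
  labWp : Var → Fin tp → ZMod 2
  labCp : Cl → Fin tp → ZMod 2
  labWn : Var → Fin tn → ZMod 2
  labCn : Cl → Fin tn → ZMod 2

/-- F₁ is a signed subgraph of F_φ: its edges are edges of F_φ joining vertices of F₁. -/
def LabSub.SubgraphOf {Var Cl : Type} {tp tn : ℕ} (F₁ : LabSub Var Cl tp tn)
    (F : SignedBip Var Cl) : Prop :=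
  ∀ w c, (F₁.pos w c → F.pos w c ∧ w ∈ F₁.VW ∧ c ∈ F₁.VC) ∧
    (F₁.neg w c → F.neg w c ∧ w ∈ F₁.VW ∧ c ∈ F₁.VC)

/-- The partial assignment ν (restricted to the variables of F₁) is of shape
(Σ⁺, Σ⁻, Π⁺, Π⁻) in F̄₁:
(I) Σ⁺ is the span of the lab⁺-labels of the true variables of F₁ and Σ⁻ the span of the
lab⁻-labels of the false variables of F₁; and
(II) every clause vertex c of F₁ is adjacent in F₁⁺ to a true variable, or adjacent
in F₁⁻ to a false variable, or lab⁺(c) is non-orthogonal to Π⁺, or lab⁻(c) is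
non-orthogonal to Π⁻. -/
def LabSub.Shape {Var Cl : Type} {tp tn : ℕ} (F₁ : LabSub Var Cl tp tn) (ν : Var → Bool)
    (Sp : Submodule (ZMod 2) (Fin tp → ZMod 2)) (Sn : Submodule (ZMod 2) (Fin tn → ZMod 2))
    (Pp : Submodule (ZMod 2) (Fin tp → ZMod 2)) (Pn : Submodule (ZMod 2) (Fin tn → ZMod 2)) :
    Prop :=
  Sp = Submodule.span (ZMod 2) (F₁.labWp '' {w | w ∈ F₁.VW ∧ ν w = true}) ∧
  Sn = Submodule.span (ZMod 2) (F₁.labWn '' {w | w ∈ F₁.VW ∧ ν w = false}) ∧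
  ∀ c ∈ F₁.VC,
    (∃ w ∈ F₁.VW, ν w = true ∧ F₁.pos w c) ∨
    (∃ w ∈ F₁.VW, ν w = false ∧ F₁.neg w c) ∨
    (∃ v ∈ Pp, dotp (F₁.labCp c) v = 1) ∨
    (∃ v ∈ Pn, dotp (F₁.labCn c) v = 1)

open Classical in
/-- The labeling composition F̄_z = F̄_x ⊗_{g|f₁,f₂} F̄_y of two (t⁺,t⁻)-labeled signed
subgraphs on disjoint vertex sets, where the relabelings f₁^±, f₂^±, g^± are given by
binary matrices: positive edges are those of F_x⁺, those of F_y⁺, and all cross pairs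
{u,v}, u ∈ V(F_x), v ∈ V(F_y), with lab_x⁺(u)·g⁺(lab_y⁺(v)) = 1 (analogously for the
negative edges, using g⁻); the new labelings are lab_z^± = f₁^± ∘ lab_x^± on V(F_x) and
lab_z^± = f₂^± ∘ lab_y^± on V(F_y). -/
noncomputable def LabSub.compose {Var Cl : Type} {tp tn : ℕ}
    (Fx Fy : LabSub Var Cl tp tn)
    (f1p f2p gp : Matrix (Fin tp) (Fin tp) (ZMod 2))
    (f1n f2n gn : Matrix (Fin tn) (Fin tn) (ZMod 2)) : LabSub Var Cl tp tn where
  pos w c := Fx.pos w c ∨ Fy.pos w c ∨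
    (w ∈ Fx.VW ∧ c ∈ Fy.VC ∧ dotp (Fx.labWp w) (gp.mulVec (Fy.labCp c)) = 1) ∨
    (c ∈ Fx.VC ∧ w ∈ Fy.VW ∧ dotp (Fx.labCp c) (gp.mulVec (Fy.labWp w)) = 1)
  neg w c := Fx.neg w c ∨ Fy.neg w c ∨
    (w ∈ Fx.VW ∧ c ∈ Fy.VC ∧ dotp (Fx.labWn w) (gn.mulVec (Fy.labCn c)) = 1) ∨
    (c ∈ Fx.VC ∧ w ∈ Fy.VW ∧ dotp (Fx.labCn c) (gn.mulVec (Fy.labWn w)) = 1)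
  VW := Fx.VW ∪ Fy.VW
  VC := Fx.VC ∪ Fy.VC
  labWp w := if w ∈ Fx.VW then f1p.mulVec (Fx.labWp w) else f2p.mulVec (Fy.labWp w)
  labCp c := if c ∈ Fx.VC then f1p.mulVec (Fx.labCp c) else f2p.mulVec (Fy.labCp c)
  labWn w := if w ∈ Fx.VW then f1n.mulVec (Fx.labWn w) else f2n.mulVec (Fy.labWn w)
  labCn c := if c ∈ Fx.VC then f1n.mulVec (Fx.labCn c) else f2n.mulVec (Fy.labCn c)

/-- F̄₁ − C₀ : delete the clause vertices of C₀ from the labeled signed graph F̄₁. -/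
def LabSub.deleteClauses {Var Cl : Type} {tp tn : ℕ} (F₁ : LabSub Var Cl tp tn)
    (C₀ : Set Cl) : LabSub Var Cl tp tn :=
  { F₁ with
    VC := F₁.VC \ C₀
    pos := fun w c => F₁.pos w c ∧ c ∉ C₀
    neg := fun w c => F₁.neg w c ∧ c ∉ C₀ }

/-- The defect of ν₁ with respect to the defective shape (Σ⁺, Σ⁻, Π⁺, Π⁻) in F̄₁:
the minimum cardinality of a set C₀ of clause vertices of F₁ such that ν₁ is of
shape (Σ⁺, Σ⁻, Π⁺, Π⁻) in F̄₁ − C₀. -/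
noncomputable def LabSub.defect {Var Cl : Type} {tp tn : ℕ} (F₁ : LabSub Var Cl tp tn)
    (ν : Var → Bool)
    (Sp : Submodule (ZMod 2) (Fin tp → ZMod 2)) (Sn : Submodule (ZMod 2) (Fin tn → ZMod 2))
    (Pp : Submodule (ZMod 2) (Fin tp → ZMod 2)) (Pn : Submodule (ZMod 2) (Fin tn → ZMod 2)) :
    ℕ :=
  sInf {k | ∃ C₀ : Set Cl, C₀ ⊆ F₁.VC ∧ Nat.card C₀ = k ∧
    (F₁.deleteClauses C₀).Shape ν Sp Sn Pp Pn}

/- ### Auxiliary lemmas -/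

lemma dotp_eq' {t : ℕ} (u v : Fin t → ZMod 2) : dotp u v = dotProduct u v := rfl

private def dotL {t : ℕ} (u : Fin t → ZMod 2) : (Fin t → ZMod 2) →ₗ[ZMod 2] ZMod 2 where
  toFun v := dotp u v
  map_add' v w := by simp [dotp, mul_add, Finset.sum_add_distrib]
  map_smul' c v := by simp [dotp, Finset.mul_sum, mul_left_comm]

lemma dotp_mulVec' {t : ℕ} (u : Fin t → ZMod 2) (M : Matrix (Fin t) (Fin t) (ZMod 2))
    (v : Fin t → ZMod 2) : dotp u (M.mulVec v) = dotp (M.transpose.mulVec u) v := by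
  rw [dotp_eq', dotp_eq', Matrix.dotProduct_mulVec, Matrix.mulVec_transpose]

lemma dotp_comm' {t : ℕ} (u v : Fin t → ZMod 2) : dotp u v = dotp v u := by
  rw [dotp_eq', dotp_eq', dotProduct_comm]

lemma dotp_add' {t : ℕ} (u v w : Fin t → ZMod 2) :
    dotp u (v + w) = dotp u v + dotp u w := map_add (dotL u) v w

private lemma zmod2_eq_one_of_ne_zero {a : ZMod 2} (h : a ≠ 0) : a = 1 := by
  revert h; revert a; decide

private lemma zmod2_add_one {a b : ZMod 2} (h : a + b = 1) : a = 1 ∨ b = 1 := by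
  revert h; revert a b; decide

lemma span_dot_iff {t : ℕ} (u : Fin t → ZMod 2) (s : Set (Fin t → ZMod 2)) :
    (∃ v ∈ Submodule.span (ZMod 2) s, dotp u v = 1) ↔ ∃ x ∈ s, dotp u x = 1 := by
  constructor
  · rintro ⟨v, hv, hv1⟩
    by_contra h
    push_neg at h
    have hker : Submodule.span (ZMod 2) s ≤ LinearMap.ker (dotL u) := by
      rw [Submodule.span_le]
      intro x hx
      simp only [SetLike.mem_coe, LinearMap.mem_ker]
      by_contra h0
      exact h x hx (zmod2_eq_one_of_ne_zero h0)
    have h0 := hker hv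
    rw [LinearMap.mem_ker] at h0
    have he : dotL u v = dotp u v := rfl
    rw [he, hv1] at h0
    exact absurd h0 (by decide)
  · rintro ⟨x, hx, h1⟩
    exact ⟨x, Submodule.subset_span hx, h1⟩

lemma sup_dot_iff {t : ℕ} (u : Fin t → ZMod 2) (P Q : Submodule (ZMod 2) (Fin t → ZMod 2)) :
    (∃ v ∈ P ⊔ Q, dotp u v = 1) ↔ (∃ v ∈ P, dotp u v = 1) ∨ (∃ v ∈ Q, dotp u v = 1) := by
  constructor
  · rintro ⟨v, hv, hv1⟩
    rcases Submodule.mem_sup.mp hv with ⟨p, hp, q, hq, rfl⟩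
    rw [dotp_add'] at hv1
    rcases zmod2_add_one hv1 with h | h
    · exact Or.inl ⟨p, hp, h⟩
    · exact Or.inr ⟨q, hq, h⟩
  · rintro (⟨v, hv, h1⟩ | ⟨v, hv, h1⟩)
    · exact ⟨v, Submodule.mem_sup_left hv, h1⟩
    · exact ⟨v, Submodule.mem_sup_right hv, h1⟩

lemma map_dot_iff {t : ℕ} (u : Fin t → ZMod 2) (M : Matrix (Fin t) (Fin t) (ZMod 2))
    (P : Submodule (ZMod 2) (Fin t → ZMod 2)) :
    (∃ v ∈ Submodule.map M.mulVecLin P, dotp u v = 1) ↔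
      ∃ v ∈ P, dotp (M.transpose.mulVec u) v = 1 := by
  constructor
  · rintro ⟨v, ⟨w, hw, rfl⟩, hv1⟩
    refine ⟨w, hw, ?_⟩
    rwa [Matrix.mulVecLin_apply, dotp_mulVec'] at hv1
  · rintro ⟨v, hv, h1⟩
    exact ⟨M.mulVec v, ⟨v, hv, rfl⟩, by rwa [dotp_mulVec']⟩

lemma cross_span_iff {Var : Type} {t : ℕ} (VW : Set Var) (lab : Var → Fin t → ZMod 2)
    (P : Var → Prop) (g : Matrix (Fin t) (Fin t) (ZMod 2))
    (S : Submodule (ZMod 2) (Fin t → ZMod 2))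
    (hS : S = Submodule.span (ZMod 2) (lab '' {w | w ∈ VW ∧ P w})) (u : Fin t → ZMod 2) :
    (∃ v ∈ Submodule.map g.mulVecLin S, dotp u v = 1) ↔
      ∃ w, w ∈ VW ∧ P w ∧ dotp u (g.mulVec (lab w)) = 1 := by
  rw [map_dot_iff, hS, span_dot_iff]
  constructor
  · rintro ⟨x, ⟨w, ⟨h1, h2⟩, rfl⟩, h3⟩
    exact ⟨w, h1, h2, by rwa [dotp_mulVec']⟩
  · rintro ⟨w, h1, h2, h3⟩
    exact ⟨lab w, ⟨w, ⟨h1, h2⟩, rfl⟩, by rwa [dotp_mulVec'] at h3⟩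

open Classical in
lemma span_label_union {Var : Type} {t : ℕ} (VWx VWy : Set Var)
    (labx laby : Var → Fin t → ZMod 2) (f1 f2 : Matrix (Fin t) (Fin t) (ZMod 2))
    (P : Var → Prop) (hdis : ∀ w, w ∈ VWy → w ∉ VWx) :
    Submodule.span (ZMod 2)
        ((fun w => if w ∈ VWx then f1.mulVec (labx w) else f2.mulVec (laby w)) ''
          {w | w ∈ VWx ∪ VWy ∧ P w})
      = Submodule.map f1.mulVecLin (Submodule.span (ZMod 2) (labx '' {w | w ∈ VWx ∧ P w})) ⊔
        Submodule.map f2.mulVecLin (Submodule.span (ZMod 2) (laby '' {w | w ∈ VWy ∧ P w})) := by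
  have hset : {w | w ∈ VWx ∪ VWy ∧ P w} = {w | w ∈ VWx ∧ P w} ∪ {w | w ∈ VWy ∧ P w} := by
    ext w; simp only [Set.mem_setOf_eq, Set.mem_union]; tauto
  rw [hset, Set.image_union, Submodule.span_union]
  congr 1
  · have h1 : (fun w => if w ∈ VWx then f1.mulVec (labx w) else f2.mulVec (laby w)) ''
        {w | w ∈ VWx ∧ P w} = f1.mulVecLin '' (labx '' {w | w ∈ VWx ∧ P w}) := by
      rw [Set.image_image]
      apply Set.image_congr
      intro w hw
      simp only [Set.mem_setOf_eq] at hw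
      rw [if_pos hw.1, Matrix.mulVecLin_apply]
    rw [h1, Submodule.span_image]
  · have h2 : (fun w => if w ∈ VWx then f1.mulVec (labx w) else f2.mulVec (laby w)) ''
        {w | w ∈ VWy ∧ P w} = f2.mulVecLin '' (laby '' {w | w ∈ VWy ∧ P w}) := by
      rw [Set.image_image]
      apply Set.image_congr
      intro w hw
      simp only [Set.mem_setOf_eq] at hw
      rw [if_neg (hdis w hw.1), Matrix.mulVecLin_apply]
    rw [h2, Submodule.span_image]

lemma card_split {Cl : Type} [Fintype Cl] (C₀ VCx VCy : Set Cl)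
    (hsub : C₀ ⊆ VCx ∪ VCy) (hd : Disjoint VCx VCy) :
    Nat.card C₀ = Nat.card ↥(C₀ ∩ VCx) + Nat.card ↥(C₀ ∩ VCy) := by
  have h1 : C₀ = (C₀ ∩ VCx) ∪ (C₀ ∩ VCy) := by
    ext c; simp only [Set.mem_union, Set.mem_inter_iff]
    constructor
    · intro hc; rcases hsub hc with h | h
      · exact Or.inl ⟨hc, h⟩
      · exact Or.inr ⟨hc, h⟩
    · rintro (⟨h, _⟩ | ⟨h, _⟩) <;> exact h
  have hd2 : Disjoint (C₀ ∩ VCx) (C₀ ∩ VCy) :=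
    hd.mono Set.inter_subset_right Set.inter_subset_right
  rw [Nat.card_coe_set_eq, Nat.card_coe_set_eq, Nat.card_coe_set_eq]
  conv_lhs => rw [h1]
  exact Set.ncard_union_eq hd2 (Set.toFinite _) (Set.toFinite _)

/-- with Σ_x^±, Σ_y^± the spans determined by ν on F̄_x, F̄_y, with Π_z^±
arbitrary subspaces, and with Σ_z^± = f₁^±(Σ_x^±) + f₂^±(Σ_y^±),
Π_x^± = (f₁^±)ᵀ(Π_z^±) + g^±(Σ_y^±), Π_y^± = (f₂^±)ᵀ(Π_z^±) + (g^±)ᵀ(Σ_x^±),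
the defect of ν in F̄_z = F̄_x ⊗_{g|f₁,f₂} F̄_y w.r.t. (Σ_z⁺, Σ_z⁻, Π_z⁺, Π_z⁻) equals the
defect of ν_x in F̄_x w.r.t. (Σ_x⁺, Σ_x⁻, Π_x⁺, Π_x⁻) plus the defect of ν_y in F̄_y
w.r.t. (Σ_y⁺, Σ_y⁻, Π_y⁺, Π_y⁻). -/
theorem statement_10 {Var Cl : Type} [Fintype Var] [Fintype Cl] {tp tn : ℕ}
    (F : SignedBip Var Cl) (Fx Fy : LabSub Var Cl tp tn)
    (hx : Fx.SubgraphOf F) (hy : Fy.SubgraphOf F)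
    (hdW : Disjoint Fx.VW Fy.VW) (hdC : Disjoint Fx.VC Fy.VC)
    (f1p f2p gp : Matrix (Fin tp) (Fin tp) (ZMod 2))
    (f1n f2n gn : Matrix (Fin tn) (Fin tn) (ZMod 2))
    (ν : Var → Bool)
    (Sxp Syp Szp Pxp Pyp Pzp : Submodule (ZMod 2) (Fin tp → ZMod 2))
    (Sxn Syn Szn Pxn Pyn Pzn : Submodule (ZMod 2) (Fin tn → ZMod 2))
    (hSxp : Sxp = Submodule.span (ZMod 2) (Fx.labWp '' {w | w ∈ Fx.VW ∧ ν w = true}))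
    (hSxn : Sxn = Submodule.span (ZMod 2) (Fx.labWn '' {w | w ∈ Fx.VW ∧ ν w = false}))
    (hSyp : Syp = Submodule.span (ZMod 2) (Fy.labWp '' {w | w ∈ Fy.VW ∧ ν w = true}))
    (hSyn : Syn = Submodule.span (ZMod 2) (Fy.labWn '' {w | w ∈ Fy.VW ∧ ν w = false}))
    (hSzp : Szp = Submodule.map f1p.mulVecLin Sxp ⊔ Submodule.map f2p.mulVecLin Syp)
    (hSzn : Szn = Submodule.map f1n.mulVecLin Sxn ⊔ Submodule.map f2n.mulVecLin Syn)
    (hPxp : Pxp = Submodule.map f1p.transpose.mulVecLin Pzp ⊔ Submodule.map gp.mulVecLin Syp)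
    (hPxn : Pxn = Submodule.map f1n.transpose.mulVecLin Pzn ⊔ Submodule.map gn.mulVecLin Syn)
    (hPyp : Pyp = Submodule.map f2p.transpose.mulVecLin Pzp ⊔
      Submodule.map gp.transpose.mulVecLin Sxp)
    (hPyn : Pyn = Submodule.map f2n.transpose.mulVecLin Pzn ⊔
      Submodule.map gn.transpose.mulVecLin Sxn) :
    (Fx.compose Fy f1p f2p gp f1n f2n gn).defect ν Szp Szn Pzp Pzn =
      Fx.defect ν Sxp Sxn Pxp Pxn + Fy.defect ν Syp Syn Pyp Pyn := by
  classical
  have hWyx : ∀ w, w ∈ Fy.VW → w ∉ Fx.VW := fun w hw => Set.disjoint_right.mp hdW hw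
  have hCxy : ∀ c, c ∈ Fx.VC → c ∉ Fy.VC := fun c hc => Set.disjoint_left.mp hdC hc
  have hCyx : ∀ c, c ∈ Fy.VC → c ∉ Fx.VC := fun c hc => Set.disjoint_right.mp hdC hc
  -- per-clause equivalence for clauses of Fx
  have condX : ∀ (C₀ : Set Cl) (c : Cl), c ∈ Fx.VC → c ∉ C₀ →
      (((∃ w ∈ ((Fx.compose Fy f1p f2p gp f1n f2n gn).deleteClauses C₀).VW, ν w = true ∧
          ((Fx.compose Fy f1p f2p gp f1n f2n gn).deleteClauses C₀).pos w c) ∨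
        (∃ w ∈ ((Fx.compose Fy f1p f2p gp f1n f2n gn).deleteClauses C₀).VW, ν w = false ∧
          ((Fx.compose Fy f1p f2p gp f1n f2n gn).deleteClauses C₀).neg w c) ∨
        (∃ v ∈ Pzp,
          dotp (((Fx.compose Fy f1p f2p gp f1n f2n gn).deleteClauses C₀).labCp c) v = 1) ∨
        (∃ v ∈ Pzn,
          dotp (((Fx.compose Fy f1p f2p gp f1n f2n gn).deleteClauses C₀).labCn c) v = 1)) ↔
       ((∃ w ∈ (Fx.deleteClauses (C₀ ∩ Fx.VC)).VW, ν w = true ∧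
          (Fx.deleteClauses (C₀ ∩ Fx.VC)).pos w c) ∨
        (∃ w ∈ (Fx.deleteClauses (C₀ ∩ Fx.VC)).VW, ν w = false ∧
          (Fx.deleteClauses (C₀ ∩ Fx.VC)).neg w c) ∨
        (∃ v ∈ Pxp, dotp ((Fx.deleteClauses (C₀ ∩ Fx.VC)).labCp c) v = 1) ∨
        (∃ v ∈ Pxn, dotp ((Fx.deleteClauses (C₀ ∩ Fx.VC)).labCn c) v = 1))) := by
    intro C₀ c hc hc0
    have hc0' : c ∉ C₀ ∩ Fx.VC := fun h => hc0 h.1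
    simp only [LabSub.deleteClauses, LabSub.compose, Set.mem_union, if_pos hc]
    have hPp : (∃ v ∈ Pxp, dotp (Fx.labCp c) v = 1) ↔
        ((∃ v ∈ Pzp, dotp (f1p.mulVec (Fx.labCp c)) v = 1) ∨
         (∃ w, w ∈ Fy.VW ∧ ν w = true ∧
            dotp (Fx.labCp c) (gp.mulVec (Fy.labWp w)) = 1)) := by
      rw [hPxp, sup_dot_iff, map_dot_iff, Matrix.transpose_transpose,
        cross_span_iff Fy.VW Fy.labWp (fun w => ν w = true) gp Syp hSyp]
    have hPn : (∃ v ∈ Pxn, dotp (Fx.labCn c) v = 1) ↔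
        ((∃ v ∈ Pzn, dotp (f1n.mulVec (Fx.labCn c)) v = 1) ∨
         (∃ w, w ∈ Fy.VW ∧ ν w = false ∧
            dotp (Fx.labCn c) (gn.mulVec (Fy.labWn w)) = 1)) := by
      rw [hPxn, sup_dot_iff, map_dot_iff, Matrix.transpose_transpose,
        cross_span_iff Fy.VW Fy.labWn (fun w => ν w = false) gn Syn hSyn]
    rw [hPp, hPn]
    constructor
    · rintro (⟨w, hw, hν, hedge, -⟩ | ⟨w, hw, hν, hedge, -⟩ | hz | hz)
      · rcases hedge with h | h | ⟨-, hcy', -⟩ | ⟨-, hwy, hD⟩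
        · exact Or.inl ⟨w, ((hx w c).1 h).2.1, hν, h, hc0'⟩
        · exact absurd ((hy w c).1 h).2.2 (hCxy c hc)
        · exact absurd hcy' (hCxy c hc)
        · exact Or.inr (Or.inr (Or.inl (Or.inr ⟨w, hwy, hν, hD⟩)))
      · rcases hedge with h | h | ⟨-, hcy', -⟩ | ⟨-, hwy, hD⟩
        · exact Or.inr (Or.inl ⟨w, ((hx w c).2 h).2.1, hν, h, hc0'⟩)
        · exact absurd ((hy w c).2 h).2.2 (hCxy c hc)
        · exact absurd hcy' (hCxy c hc)
        · exact Or.inr (Or.inr (Or.inr (Or.inr ⟨w, hwy, hν, hD⟩)))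
      · exact Or.inr (Or.inr (Or.inl (Or.inl hz)))
      · exact Or.inr (Or.inr (Or.inr (Or.inl hz)))
    · rintro (⟨w, hw, hν, hp, -⟩ | ⟨w, hw, hν, hp, -⟩ |
        (hz | ⟨w, hw, hν, hD⟩) | (hz | ⟨w, hw, hν, hD⟩))
      · exact Or.inl ⟨w, Or.inl hw, hν, Or.inl hp, hc0⟩
      · exact Or.inr (Or.inl ⟨w, Or.inl hw, hν, Or.inl hp, hc0⟩)
      · exact Or.inr (Or.inr (Or.inl hz))
      · exact Or.inl ⟨w, Or.inr hw, hν, Or.inr (Or.inr (Or.inr ⟨hc, hw, hD⟩)), hc0⟩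
      · exact Or.inr (Or.inr (Or.inr hz))
      · exact Or.inr (Or.inl ⟨w, Or.inr hw, hν, Or.inr (Or.inr (Or.inr ⟨hc, hw, hD⟩)), hc0⟩)
  -- per-clause equivalence for clauses of Fy
  have condY : ∀ (C₀ : Set Cl) (c : Cl), c ∈ Fy.VC → c ∉ C₀ →
      (((∃ w ∈ ((Fx.compose Fy f1p f2p gp f1n f2n gn).deleteClauses C₀).VW, ν w = true ∧
          ((Fx.compose Fy f1p f2p gp f1n f2n gn).deleteClauses C₀).pos w c) ∨
        (∃ w ∈ ((Fx.compose Fy f1p f2p gp f1n f2n gn).deleteClauses C₀).VW, ν w = false ∧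
          ((Fx.compose Fy f1p f2p gp f1n f2n gn).deleteClauses C₀).neg w c) ∨
        (∃ v ∈ Pzp,
          dotp (((Fx.compose Fy f1p f2p gp f1n f2n gn).deleteClauses C₀).labCp c) v = 1) ∨
        (∃ v ∈ Pzn,
          dotp (((Fx.compose Fy f1p f2p gp f1n f2n gn).deleteClauses C₀).labCn c) v = 1)) ↔
       ((∃ w ∈ (Fy.deleteClauses (C₀ ∩ Fy.VC)).VW, ν w = true ∧
          (Fy.deleteClauses (C₀ ∩ Fy.VC)).pos w c) ∨
        (∃ w ∈ (Fy.deleteClauses (C₀ ∩ Fy.VC)).VW, ν w = false ∧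
          (Fy.deleteClauses (C₀ ∩ Fy.VC)).neg w c) ∨
        (∃ v ∈ Pyp, dotp ((Fy.deleteClauses (C₀ ∩ Fy.VC)).labCp c) v = 1) ∨
        (∃ v ∈ Pyn, dotp ((Fy.deleteClauses (C₀ ∩ Fy.VC)).labCn c) v = 1))) := by
    intro C₀ c hc hc0
    have hcx : c ∉ Fx.VC := hCyx c hc
    have hc0' : c ∉ C₀ ∩ Fy.VC := fun h => hc0 h.1
    simp only [LabSub.deleteClauses, LabSub.compose, Set.mem_union, if_neg hcx]
    have hflipp : ∀ w, dotp (Fx.labWp w) (gp.mulVec (Fy.labCp c)) =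
        dotp (Fy.labCp c) (gp.transpose.mulVec (Fx.labWp w)) := fun w => by
      rw [dotp_mulVec', dotp_comm']
    have hflipn : ∀ w, dotp (Fx.labWn w) (gn.mulVec (Fy.labCn c)) =
        dotp (Fy.labCn c) (gn.transpose.mulVec (Fx.labWn w)) := fun w => by
      rw [dotp_mulVec', dotp_comm']
    have hPp : (∃ v ∈ Pyp, dotp (Fy.labCp c) v = 1) ↔
        ((∃ v ∈ Pzp, dotp (f2p.mulVec (Fy.labCp c)) v = 1) ∨
         (∃ w, w ∈ Fx.VW ∧ ν w = true ∧
            dotp (Fy.labCp c) (gp.transpose.mulVec (Fx.labWp w)) = 1)) := by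
      rw [hPyp, sup_dot_iff, map_dot_iff, Matrix.transpose_transpose,
        cross_span_iff Fx.VW Fx.labWp (fun w => ν w = true) gp.transpose Sxp hSxp]
    have hPn : (∃ v ∈ Pyn, dotp (Fy.labCn c) v = 1) ↔
        ((∃ v ∈ Pzn, dotp (f2n.mulVec (Fy.labCn c)) v = 1) ∨
         (∃ w, w ∈ Fx.VW ∧ ν w = false ∧
            dotp (Fy.labCn c) (gn.transpose.mulVec (Fx.labWn w)) = 1)) := by
      rw [hPyn, sup_dot_iff, map_dot_iff, Matrix.transpose_transpose,
        cross_span_iff Fx.VW Fx.labWn (fun w => ν w = false) gn.transpose Sxn hSxn]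
    rw [hPp, hPn]
    constructor
    · rintro (⟨w, hw, hν, hedge, -⟩ | ⟨w, hw, hν, hedge, -⟩ | hz | hz)
      · rcases hedge with h | h | ⟨hwx, -, hD⟩ | ⟨hcx', -, -⟩
        · exact absurd ((hx w c).1 h).2.2 hcx
        · exact Or.inl ⟨w, ((hy w c).1 h).2.1, hν, h, hc0'⟩
        · exact Or.inr (Or.inr (Or.inl (Or.inr ⟨w, hwx, hν, by rw [← hflipp w]; exact hD⟩)))
        · exact absurd hcx' hcx
      · rcases hedge with h | h | ⟨hwx, -, hD⟩ | ⟨hcx', -, -⟩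
        · exact absurd ((hx w c).2 h).2.2 hcx
        · exact Or.inr (Or.inl ⟨w, ((hy w c).2 h).2.1, hν, h, hc0'⟩)
        · exact Or.inr (Or.inr (Or.inr (Or.inr ⟨w, hwx, hν, by rw [← hflipn w]; exact hD⟩)))
        · exact absurd hcx' hcx
      · exact Or.inr (Or.inr (Or.inl (Or.inl hz)))
      · exact Or.inr (Or.inr (Or.inr (Or.inl hz)))
    · rintro (⟨w, hw, hν, hp, -⟩ | ⟨w, hw, hν, hp, -⟩ |
        (hz | ⟨w, hw, hν, hD⟩) | (hz | ⟨w, hw, hν, hD⟩))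
      · exact Or.inl ⟨w, Or.inr hw, hν, Or.inr (Or.inl hp), hc0⟩
      · exact Or.inr (Or.inl ⟨w, Or.inr hw, hν, Or.inr (Or.inl hp), hc0⟩)
      · exact Or.inr (Or.inr (Or.inl hz))
      · exact Or.inl ⟨w, Or.inl hw, hν,
          Or.inr (Or.inr (Or.inl ⟨hw, hc, by rw [hflipp w]; exact hD⟩)), hc0⟩
      · exact Or.inr (Or.inr (Or.inr hz))
      · exact Or.inr (Or.inl ⟨w, Or.inl hw, hν,
          Or.inr (Or.inr (Or.inl ⟨hw, hc, by rw [hflipn w]; exact hD⟩)), hc0⟩)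
  -- shape decomposition
  have key : ∀ C₀ : Set Cl,
      (((Fx.compose Fy f1p f2p gp f1n f2n gn).deleteClauses C₀).Shape ν Szp Szn Pzp Pzn ↔
       ((Fx.deleteClauses (C₀ ∩ Fx.VC)).Shape ν Sxp Sxn Pxp Pxn ∧
        (Fy.deleteClauses (C₀ ∩ Fy.VC)).Shape ν Syp Syn Pyp Pyn)) := by
    intro C₀
    have eIzp : Szp = Submodule.span (ZMod 2)
        (((Fx.compose Fy f1p f2p gp f1n f2n gn).deleteClauses C₀).labWp ''
          {w | w ∈ ((Fx.compose Fy f1p f2p gp f1n f2n gn).deleteClauses C₀).VW ∧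
            ν w = true}) := by
      show Szp = Submodule.span (ZMod 2)
        ((fun w => if w ∈ Fx.VW then f1p.mulVec (Fx.labWp w) else f2p.mulVec (Fy.labWp w)) ''
          {w | w ∈ Fx.VW ∪ Fy.VW ∧ ν w = true})
      rw [span_label_union Fx.VW Fy.VW Fx.labWp Fy.labWp f1p f2p (fun w => ν w = true) hWyx,
        ← hSxp, ← hSyp, ← hSzp]
    have eIzn : Szn = Submodule.span (ZMod 2)
        (((Fx.compose Fy f1p f2p gp f1n f2n gn).deleteClauses C₀).labWn ''
          {w | w ∈ ((Fx.compose Fy f1p f2p gp f1n f2n gn).deleteClauses C₀).VW ∧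
            ν w = false}) := by
      show Szn = Submodule.span (ZMod 2)
        ((fun w => if w ∈ Fx.VW then f1n.mulVec (Fx.labWn w) else f2n.mulVec (Fy.labWn w)) ''
          {w | w ∈ Fx.VW ∪ Fy.VW ∧ ν w = false})
      rw [span_label_union Fx.VW Fy.VW Fx.labWn Fy.labWn f1n f2n (fun w => ν w = false) hWyx,
        ← hSxn, ← hSyn, ← hSzn]
    constructor
    · rintro ⟨-, -, h3⟩
      refine ⟨⟨hSxp, hSxn, ?_⟩, ⟨hSyp, hSyn, ?_⟩⟩
      · intro c hc
        have hc' : c ∈ Fx.VC \ (C₀ ∩ Fx.VC) := hc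
        have hcx : c ∈ Fx.VC := hc'.1
        have hc0 : c ∉ C₀ := fun h => hc'.2 ⟨h, hcx⟩
        have hcz : c ∈ ((Fx.compose Fy f1p f2p gp f1n f2n gn).deleteClauses C₀).VC :=
          (⟨Or.inl hcx, hc0⟩ : c ∈ (Fx.VC ∪ Fy.VC) \ C₀)
        exact (condX C₀ c hcx hc0).mp (h3 c hcz)
      · intro c hc
        have hc' : c ∈ Fy.VC \ (C₀ ∩ Fy.VC) := hc
        have hcy : c ∈ Fy.VC := hc'.1
        have hc0 : c ∉ C₀ := fun h => hc'.2 ⟨h, hcy⟩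
        have hcz : c ∈ ((Fx.compose Fy f1p f2p gp f1n f2n gn).deleteClauses C₀).VC :=
          (⟨Or.inr hcy, hc0⟩ : c ∈ (Fx.VC ∪ Fy.VC) \ C₀)
        exact (condY C₀ c hcy hc0).mp (h3 c hcz)
    · rintro ⟨⟨-, -, h3x⟩, ⟨-, -, h3y⟩⟩
      refine ⟨eIzp, eIzn, ?_⟩
      intro c hc
      have hc' : c ∈ (Fx.VC ∪ Fy.VC) \ C₀ := hc
      have hc0 : c ∉ C₀ := hc'.2
      rcases hc'.1 with hcx | hcy
      · exact (condX C₀ c hcx hc0).mpr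
          (h3x c (⟨hcx, fun h => hc0 h.1⟩ : c ∈ Fx.VC \ (C₀ ∩ Fx.VC)))
      · exact (condY C₀ c hcy hc0).mpr
          (h3y c (⟨hcy, fun h => hc0 h.1⟩ : c ∈ Fy.VC \ (C₀ ∩ Fy.VC)))
  -- nonemptiness of the defect sets
  have hXfull : (Fx.deleteClauses Fx.VC).Shape ν Sxp Sxn Pxp Pxn := by
    refine ⟨hSxp, hSxn, ?_⟩
    intro c hc
    have hc' : c ∈ Fx.VC \ Fx.VC := hc
    exact absurd hc'.1 hc'.2
  have hYfull : (Fy.deleteClauses Fy.VC).Shape ν Syp Syn Pyp Pyn := by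
    refine ⟨hSyp, hSyn, ?_⟩
    intro c hc
    have hc' : c ∈ Fy.VC \ Fy.VC := hc
    exact absurd hc'.1 hc'.2
  have hXne : {k | ∃ C₀ : Set Cl, C₀ ⊆ Fx.VC ∧ Nat.card C₀ = k ∧
      (Fx.deleteClauses C₀).Shape ν Sxp Sxn Pxp Pxn}.Nonempty :=
    ⟨Nat.card ↥Fx.VC, Fx.VC, subset_rfl, rfl, hXfull⟩
  have hYne : {k | ∃ C₀ : Set Cl, C₀ ⊆ Fy.VC ∧ Nat.card C₀ = k ∧
      (Fy.deleteClauses C₀).Shape ν Syp Syn Pyp Pyn}.Nonempty :=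
    ⟨Nat.card ↥Fy.VC, Fy.VC, subset_rfl, rfl, hYfull⟩
  obtain ⟨C₀x, hsubx, hcardx, hshx⟩ := Nat.sInf_mem hXne
  obtain ⟨C₀y, hsuby, hcardy, hshy⟩ := Nat.sInf_mem hYne
  have hxcap : (C₀x ∪ C₀y) ∩ Fx.VC = C₀x := by
    ext c
    simp only [Set.mem_inter_iff, Set.mem_union]
    constructor
    · rintro ⟨h | h, hvc⟩
      · exact h
      · exact absurd hvc (hCyx c (hsuby h))
    · intro h
      exact ⟨Or.inl h, hsubx h⟩
  have hycap : (C₀x ∪ C₀y) ∩ Fy.VC = C₀y := by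
    ext c
    simp only [Set.mem_inter_iff, Set.mem_union]
    constructor
    · rintro ⟨h | h, hvc⟩
      · exact absurd hvc (hCxy c (hsubx h))
      · exact h
    · intro h
      exact ⟨Or.inr h, hsuby h⟩
  have hzsh : ((Fx.compose Fy f1p f2p gp f1n f2n gn).deleteClauses (C₀x ∪ C₀y)).Shape
      ν Szp Szn Pzp Pzn := by
    refine (key _).mpr ?_
    rw [hxcap, hycap]
    exact ⟨hshx, hshy⟩
  have hsubz : C₀x ∪ C₀y ⊆ (Fx.compose Fy f1p f2p gp f1n f2n gn).VC :=
    Set.union_subset_union hsubx hsuby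
  have hcardu : Nat.card ↥(C₀x ∪ C₀y) = Nat.card ↥C₀x + Nat.card ↥C₀y := by
    rw [card_split (C₀x ∪ C₀y) Fx.VC Fy.VC (Set.union_subset_union hsubx hsuby) hdC,
      hxcap, hycap]
  have hzmem : Nat.card ↥(C₀x ∪ C₀y) ∈ {k | ∃ C₀ : Set Cl,
      C₀ ⊆ (Fx.compose Fy f1p f2p gp f1n f2n gn).VC ∧ Nat.card C₀ = k ∧
      ((Fx.compose Fy f1p f2p gp f1n f2n gn).deleteClauses C₀).Shape ν Szp Szn Pzp Pzn} :=
    ⟨C₀x ∪ C₀y, hsubz, rfl, hzsh⟩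
  have h1 : (Fx.compose Fy f1p f2p gp f1n f2n gn).defect ν Szp Szn Pzp Pzn ≤
      Fx.defect ν Sxp Sxn Pxp Pxn + Fy.defect ν Syp Syn Pyp Pyn := by
    have := Nat.sInf_le hzmem
    rw [hcardu, hcardx, hcardy] at this
    exact this
  have hZne : {k | ∃ C₀ : Set Cl,
      C₀ ⊆ (Fx.compose Fy f1p f2p gp f1n f2n gn).VC ∧ Nat.card C₀ = k ∧
      ((Fx.compose Fy f1p f2p gp f1n f2n gn).deleteClauses C₀).Shape
        ν Szp Szn Pzp Pzn}.Nonempty := ⟨_, hzmem⟩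
  obtain ⟨C₀, hsub, hcard, hsh⟩ := Nat.sInf_mem hZne
  obtain ⟨hshx', hshy'⟩ := (key C₀).mp hsh
  have hx1 : Fx.defect ν Sxp Sxn Pxp Pxn ≤ Nat.card ↥(C₀ ∩ Fx.VC) :=
    Nat.sInf_le ⟨C₀ ∩ Fx.VC, Set.inter_subset_right, rfl, hshx'⟩
  have hy1 : Fy.defect ν Syp Syn Pyp Pyn ≤ Nat.card ↥(C₀ ∩ Fy.VC) :=
    Nat.sInf_le ⟨C₀ ∩ Fy.VC, Set.inter_subset_right, rfl, hshy'⟩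
  have hsub' : C₀ ⊆ Fx.VC ∪ Fy.VC := hsub
  have h2 : Fx.defect ν Sxp Sxn Pxp Pxn + Fy.defect ν Syp Syn Pyp Pyn ≤
      (Fx.compose Fy f1p f2p gp f1n f2n gn).defect ν Szp Szn Pzp Pzn := by
    have hc2 : (Fx.compose Fy f1p f2p gp f1n f2n gn).defect ν Szp Szn Pzp Pzn =
        Nat.card ↥C₀ := hcard.symm
    rw [hc2, card_split C₀ Fx.VC Fy.VC hsub' hdC]
    exact Nat.add_le_add hx1 hy1
  exact le_antisymm h1 h2
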